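/- arXiv:math/0304205 — 2 statements merged into one kernel-verified Lean document; each statement's English description precedes it below -/
import Mathlib

section
/- Let Ω be an infinite set. Then the symmetric group Sym(Ω) has uncountable cofinality: there is no countable strictly increasing chain H₀ < H₁ < H₂ < ⋯ of proper subgroups of Sym(Ω) whose union is Sym(Ω). -/
/-!
Identify `Ω` with `(ℕ ⊕ ℕ) × Ω`, a countable family of blocks, each a copy of `Ω`, and let
`H₀ ≤ H₁ ≤ ⋯` exhaust `Sym(Ω)`. Were there no `j` and level containing, for every `c`, the
permutation acting as `c` on block `inl j` and as `c⁻¹` on block `inr j`, a counterexample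
`c_j` for level `max j (level of the swap of the two blocks)` could be chosen for every `j`;
the product `D` of all the `c_j` lies in some `H_N`, and `D` times the inverse of its conjugate
by the swap at `N` would be a counterexample in level `N`. Products of these twisted elements
give every commutator on block `inr j`, and `Sym(Ω)` is perfect (a Hilbert-hotel swindle), so
some `H_K` contains the full symmetric group of that block, a moiety. The symmetric groups of
two moieties that cover `Ω` and meet in a moiety generate `Sym(Ω)`; both are conjugates of the
symmetric group of the block by two fixed permutations, so a later level is everything.
-/

open Equiv Cardinal Set
open scoped commutatorElement

theorem nonempty_equiv_prod_of_countable (J Ω : Type*) [Countable J] [Nonempty J] [Infinite Ω] :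
    Nonempty (Ω ≃ J × Ω) := by
  refine lift_mk_eq'.mp ?_
  rw [mk_prod, lift_mul, lift_lift, lift_lift, mul_eq_right]
  · simp
  · simpa using (lift_le.mpr (mk_le_aleph0 (α := J))).trans (by simp)
  · simp

theorem Equiv.subtypeCongr_apply_iff {α : Type*} {p q : α → Prop} [DecidablePred p]
    [DecidablePred q] (e : { x // p x } ≃ { x // q x }) (f : { x // ¬p x } ≃ { x // ¬q x })
    (a : α) : q (e.subtypeCongr f a) ↔ p a := by
  by_cases ha : p a
  · simpa [Equiv.subtypeCongr, ha] using (e ⟨a, ha⟩).2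
  · simpa [Equiv.subtypeCongr, ha] using (f ⟨a, ha⟩).2

section Cardinal

variable {X : Type*}

theorem mk_set_eq_of_subset {A B : Set X} (h : A ⊆ B) (hA : #A = #X) : #B = #X :=
  le_antisymm (mk_set_le B) (hA ▸ mk_le_mk_of_subset h)

theorem exists_subset_mk_eq_mk_sdiff_eq {W : Set X} (hW : ℵ₀ ≤ #W) :
    ∃ S ⊆ W, #S = #W ∧ #(W \ S : Set X) = #W := by
  obtain ⟨q⟩ := Cardinal.eq.mp (show #(W ⊕ W) = #W by simp [add_eq_self hW])
  have hmk : ∀ f : W → W ⊕ W, f.Injective → #((↑) '' range (q ∘ f) : Set X) = #W :=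
    fun f hf => by rw [mk_image_eq Subtype.val_injective, mk_range_eq _ (q.injective.comp hf)]
  refine ⟨(↑) '' range (q ∘ Sum.inl), by simp, hmk _ Sum.inl_injective,
    le_antisymm (mk_le_mk_of_subset sdiff_subset) ?_⟩
  rw [← hmk _ Sum.inr_injective]
  refine mk_le_mk_of_subset ?_
  rintro _ ⟨_, ⟨w, rfl⟩, rfl⟩
  refine ⟨(q (Sum.inr w)).2, ?_⟩
  rintro ⟨_, ⟨w', hw'⟩, h⟩
  exact Sum.inl_ne_inr (q.injective (Subtype.ext h ▸ hw'))

end Cardinal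

section PermOn

variable {X : Type*}

def permOn (U : Set X) : Subgroup (Perm X) := fixingSubgroup (Perm X) Uᶜ

theorem mem_permOn {U : Set X} {σ : Perm X} : σ ∈ permOn U ↔ ∀ x ∉ U, σ x = x :=
  mem_fixingSubgroup_iff (Perm X)

theorem permOn_mono {U V : Set X} (h : U ⊆ V) : permOn U ≤ permOn V :=
  fixingSubgroup_antitone (Perm X) X (compl_subset_compl.mpr h)

theorem apply_mem_iff_of_mem_permOn {U : Set X} {σ : Perm X} (hσ : σ ∈ permOn U) (x : X) :
    σ x ∈ U ↔ x ∈ U := by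
  refine ⟨fun h => ?_, fun h => ?_⟩
  · by_contra hx
    rw [mem_permOn.mp hσ x hx] at h
    exact hx h
  · by_contra hx
    exact hx (by rwa [σ.injective (mem_permOn.mp hσ _ hx)])

theorem conj_mem_permOn {s t : Set X} {g σ : Perm X} (hg : ⇑g ⁻¹' t = s) (hσ : σ ∈ permOn t) :
    g⁻¹ * σ * g ∈ permOn s :=
  mem_permOn.mpr fun x hx => by
    have hgx : g x ∉ t := by rwa [← mem_preimage, hg]
    simp [mem_permOn.mp hσ _ hgx]

theorem mem_permOn_sup_permOn_compl {S : Set X} {ρ : Perm X} (h : ⇑ρ ⁻¹' S = S) :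
    ρ ∈ permOn S ⊔ permOn Sᶜ := by
  classical
  have hρ : ∀ x, ρ x ∈ S ↔ x ∈ S := fun x => by rw [← mem_preimage, h]
  set ρS := Perm.ofSubtype (ρ.subtypePerm hρ)
  have hρS : ρS ∈ permOn S := mem_permOn.mpr fun x hx => Perm.ofSubtype_apply_of_not_mem _ hx
  have hrest : ρS⁻¹ * ρ ∈ permOn Sᶜ := mem_permOn.mpr fun x hx => by
    rw [Set.notMem_compl_iff] at hx
    rw [Perm.mul_apply, Perm.inv_eq_iff_eq, Perm.ofSubtype_apply_of_mem _ hx]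
    rfl
  simpa using Subgroup.mul_mem_sup hρS hrest

theorem exists_mem_permOn_preimage_eq {V s t : Set X} (hs : s ⊆ V) (ht : t ⊆ V)
    (h : #s = #t) (h' : #(V \ s : Set X) = #(V \ t : Set X)) :
    ∃ g ∈ permOn V, ⇑g ⁻¹' t = s := by
  classical
  have hin : ∀ u ⊆ V, #{x : V // (x : X) ∈ u} = #u := fun u hu =>
    mk_congr (subtypeSubtypeEquivSubtype fun hx => hu hx)
  have hout : ∀ u : Set X, #{x : V // (x : X) ∉ u} = #(V \ u : Set X) := fun u =>
    mk_congr (subtypeSubtypeEquivSubtypeInter (· ∈ V) (· ∉ u))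
  obtain ⟨e⟩ := Cardinal.eq.mp ((hin s hs).trans (h.trans (hin t ht).symm))
  obtain ⟨f⟩ := Cardinal.eq.mp ((hout s).trans (h'.trans (hout t).symm))
  refine ⟨Perm.ofSubtype (e.subtypeCongr f),
    mem_permOn.mpr fun x hx => Perm.ofSubtype_apply_of_not_mem _ hx, ?_⟩
  ext x
  by_cases hx : x ∈ V
  · rw [mem_preimage, Perm.ofSubtype_apply_of_mem _ hx]
    exact e.subtypeCongr_apply_iff f ⟨x, hx⟩
  · rw [mem_preimage, Perm.ofSubtype_apply_of_not_mem _ hx]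
    exact iff_of_false (fun h => hx (ht h)) (fun h => hx (hs h))

theorem mem_permOn_sup_of_mk_inter_preimage_eq {U V : Set X} (hX : ℵ₀ ≤ #X)
    (hUV : U ∪ V = Set.univ) (hT : #(U ∩ V : Set X) = #X) (hU : #(Uᶜ : Set X) = #X)
    {π : Perm X} (hπ : #(V ∩ ⇑π ⁻¹' V : Set X) = #X) : π ∈ permOn U ⊔ permOn V := by
  have hUcV : Uᶜ ⊆ V := fun x hx => (hUV ▸ mem_univ x : x ∈ U ∪ V).resolve_left hx
  have hVUc : #(V \ Uᶜ : Set X) = #X := by rwa [Set.sdiff_compl, inter_comm]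
  obtain ⟨S, hSW, hS, hWS⟩ := exists_subset_mk_eq_mk_sdiff_eq (hπ ▸ hX)
  rw [hπ] at hS hWS
  have hSV : S ⊆ V := hSW.trans inter_subset_left
  -- `v₀` moves `Uᶜ` onto `S`, and `v₁` moves `π '' S` back onto `Uᶜ`, both inside `V`
  obtain ⟨v₀, hv₀, hv₀S⟩ := exists_mem_permOn_preimage_eq hUcV hSV (hU.trans hS.symm)
    (hVUc.trans (mk_set_eq_of_subset (sdiff_subset_sdiff_left inter_subset_left) hWS).symm)
  have hπS : π '' S ⊆ V := image_subset_iff.mpr (hSW.trans inter_subset_right)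
  have hVπS : #(V \ π '' S : Set X) = #X := by
    refine mk_set_eq_of_subset ?_ ((mk_image_eq π.injective).trans hWS)
    rw [image_sdiff π.injective]
    exact sdiff_subset_sdiff_left (image_subset_iff.mpr inter_subset_right)
  obtain ⟨v₁, hv₁, hv₁S⟩ := exists_mem_permOn_preimage_eq hπS hUcV
    (((mk_image_eq π.injective).trans hS).trans hU.symm) (hVπS.trans hVUc.symm)
  have hρ : ⇑(v₁ * π * v₀) ⁻¹' Uᶜ = Uᶜ := by
    simp only [Perm.coe_mul, preimage_comp, hv₁S, Equiv.preimage_image, hv₀S]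
  have hρ' : v₁ * π * v₀ ∈ permOn U ⊔ permOn V := by
    have := mem_permOn_sup_permOn_compl hρ
    rw [compl_compl, sup_comm] at this
    exact sup_le_sup_left (permOn_mono hUcV) _ this
  have hVle : permOn V ≤ permOn U ⊔ permOn V := le_sup_right
  simpa [mul_assoc] using mul_mem (mul_mem (inv_mem (hVle hv₁)) hρ') (inv_mem (hVle hv₀))

theorem permOn_sup_permOn_eq_top {U V : Set X} (hX : ℵ₀ ≤ #X) (hUV : U ∪ V = Set.univ)
    (hT : #(U ∩ V : Set X) = #X) (hU : #(Uᶜ : Set X) = #X) (hV : #(Vᶜ : Set X) = #X) :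
    permOn U ⊔ permOn V = ⊤ := by
  refine eq_top_iff.mpr fun π _ => ?_
  by_cases hπ : #(V ∩ ⇑π ⁻¹' V : Set X) = #X
  · exact mem_permOn_sup_of_mk_inter_preimage_eq hX hUV hT hU hπ
  have hVcU : Vᶜ ⊆ U := fun x hx => (hUV ▸ mem_univ x : x ∈ U ∪ V).resolve_right hx
  -- the points that `π` sends into `V` mostly lie in `Vᶜ`; `u` moves them onto `U ∩ V`
  have hS : #(Vᶜ ∩ ⇑π ⁻¹' V : Set X) = #X := by
    by_contra hS
    have hsplit : ⇑π ⁻¹' V ⊆ (V ∩ ⇑π ⁻¹' V) ∪ (Vᶜ ∩ ⇑π ⁻¹' V) := fun x hx => by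
      by_cases hxV : x ∈ V
      exacts [Or.inl ⟨hxV, hx⟩, Or.inr ⟨hxV, hx⟩]
    refine (mk_le_mk_of_subset hsplit |>.trans (mk_union_le _ _) |>.trans_lt
      (add_lt_of_lt hX ((mk_set_le _).lt_of_ne hπ) ((mk_set_le _).lt_of_ne hS))).ne ?_
    rw [mk_preimage_equiv]
    exact mk_set_eq_of_subset inter_subset_right hT
  have hUT : #(U \ (U ∩ V) : Set X) = #X := by
    rwa [sdiff_self_inter, Set.sdiff_eq, inter_eq_right.mpr hVcU]
  obtain ⟨u, hu, huS⟩ := exists_mem_permOn_preimage_eq inter_subset_left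
    (inter_subset_left.trans hVcU) (hT.trans hS.symm)
    (hUT.trans (mk_set_eq_of_subset (B := U \ (Vᶜ ∩ ⇑π ⁻¹' V))
      (fun x hx => ⟨hx.1, fun h => h.1 hx.2⟩) hT).symm)
  have hπu : π * u ∈ permOn U ⊔ permOn V := by
    refine mem_permOn_sup_of_mk_inter_preimage_eq hX hUV hT hU (mk_set_eq_of_subset ?_ hT)
    intro x hx
    have hux : u x ∈ Vᶜ ∩ ⇑π ⁻¹' V := by rw [← mem_preimage, huS]; exact hx
    exact ⟨hx.2, hux.2⟩
  simpa using mul_mem hπu (inv_mem (le_sup_left (b := permOn V) hu))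

def IsMoiety (S : Set X) : Prop := #S = #X ∧ #(Sᶜ : Set X) = #X

theorem IsMoiety.exists_preimage_eq {s t : Set X} (hs : IsMoiety s) (ht : IsMoiety t) :
    ∃ g : Perm X, ⇑g ⁻¹' t = s := by
  obtain ⟨g, -, hg⟩ := exists_mem_permOn_preimage_eq (subset_univ s) (subset_univ t)
    (hs.1.trans ht.1.symm) (by simpa only [← compl_eq_univ_sdiff] using hs.2.trans ht.2.symm)
  exact ⟨g, hg⟩

theorem IsMoiety.exists_forall_conj_mem_imp_eq_top (hX : ℵ₀ ≤ #X) {B : Set X}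
    (hB : IsMoiety B) : ∃ g₁ g₂ : Perm X, ∀ K : Subgroup (Perm X),
      (∀ σ ∈ permOn B, g₁ * σ * g₁⁻¹ ∈ K ∧ g₂ * σ * g₂⁻¹ ∈ K) → K = ⊤ := by
  obtain ⟨C, hCB, hC, hBC⟩ := exists_subset_mk_eq_mk_sdiff_eq (hB.2 ▸ hX)
  rw [hB.2] at hC hBC
  -- split `Bᶜ = C ∪ D`; the moieties `Cᶜ` and `Dᶜ` cover `X` and meet in `B`
  set D := Bᶜ \ C
  have hCD : Cᶜ ∩ Dᶜ = B := by rw [← compl_union, union_sdiff_cancel hCB, compl_compl]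
  have hcover : Cᶜ ∪ Dᶜ = Set.univ := by rw [← compl_inter, Set.inter_sdiff_self, compl_empty]
  have hmoiety : ∀ E : Set X, #E = #X → B ⊆ Eᶜ → IsMoiety Eᶜ := fun E hE hBE =>
    ⟨mk_set_eq_of_subset hBE hB.1, by rwa [compl_compl]⟩
  obtain ⟨g₁, hg₁⟩ := hB.exists_preimage_eq (hmoiety C hC (hCD ▸ inter_subset_left))
  obtain ⟨g₂, hg₂⟩ := hB.exists_preimage_eq (hmoiety D hBC (hCD ▸ inter_subset_right))
  refine ⟨g₁, g₂, fun K hK => ?_⟩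
  rw [eq_top_iff, ← permOn_sup_permOn_eq_top hX hcover (hCD ▸ hB.1) (by rwa [compl_compl])
    (by rwa [compl_compl])]
  refine sup_le (fun σ hσ => ?_) (fun σ hσ => ?_)
  · simpa [mul_assoc] using (hK _ (conj_mem_permOn hg₁ hσ)).1
  · simpa [mul_assoc] using (hK _ (conj_mem_permOn hg₂ hσ)).2

end PermOn

section Blocks

variable {J Ω : Type*}

def blockPerm : (J → Perm Ω) →* Perm (J × Ω) where
  toFun f := prodShear (Equiv.refl J) f
  map_one' := rfl
  map_mul' _ _ := rfl

@[simp]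
theorem blockPerm_apply (f : J → Perm Ω) (p : J × Ω) : blockPerm f p = (p.1, f p.1 p.2) := rfl

theorem prodCongr_conj_blockPerm (π : Perm J) (f : J → Perm Ω) :
    prodCongr π (Equiv.refl Ω) * blockPerm f * (prodCongr π (Equiv.refl Ω))⁻¹ =
      blockPerm (f ∘ π.symm) := by
  ext p <;> simp [Perm.mul_apply, Perm.inv_def]

def block (t : J) : Set (J × Ω) := Prod.fst ⁻¹' {t}

def blockEquiv (t : J) : block (Ω := Ω) t ≃ Ω where
  toFun p := p.1.2
  invFun x := ⟨(t, x), rfl⟩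
  left_inv p := Subtype.ext (Prod.ext p.2.symm rfl)
  right_inv _ := rfl

theorem exists_blockPerm_mulSingle_eq [DecidableEq J] {t : J} {σ : Perm (J × Ω)}
    (hσ : σ ∈ permOn (block t)) : ∃ c : Perm Ω, blockPerm (Pi.mulSingle t c) = σ := by
  refine ⟨(blockEquiv t).permCongr (σ.subtypePerm (apply_mem_iff_of_mem_permOn hσ)), ?_⟩
  ext ⟨j, x⟩ : 1
  by_cases hj : j = t
  · subst hj
    have hσx : (σ (j, x)).1 = j := (apply_mem_iff_of_mem_permOn hσ (j, x)).mpr rfl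
    exact Prod.ext hσx.symm (by simp [blockEquiv, permCongr_apply])
  · rw [blockPerm_apply, Pi.mulSingle_eq_of_ne hj, mem_permOn.mp hσ _ hj]
    rfl

theorem isMoiety_block [Countable J] [Infinite Ω] {t t' : J} (h : t ≠ t') :
    IsMoiety (block (Ω := Ω) t) := by
  have : Nonempty J := ⟨t⟩
  obtain ⟨e⟩ := nonempty_equiv_prod_of_countable J Ω
  have hmk : ∀ s : J, #(block (Ω := Ω) s) = #(J × Ω) := fun s => mk_congr ((blockEquiv s).trans e)
  exact ⟨hmk t, mk_set_eq_of_subset (fun p (hp : p.1 = t') (ht : p.1 = t) => h (ht.symm.trans hp))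
    (hmk t')⟩

def twist {G : Type*} [DecidableEq J] [Group G] (a b : J) (c : G) : J → G :=
  Pi.mulSingle a c * Pi.mulSingle b c⁻¹

theorem twist_mul_twist_mul_inv_twist {G : Type*} [DecidableEq J] [Group G] {a b : J}
    (hab : a ≠ b) (c d : G) :
    twist a b c * twist a b d * (twist a b (c * d))⁻¹ = Pi.mulSingle b ⁅c⁻¹, d⁻¹⁆ := by
  funext t
  by_cases ha : t = a
  · subst ha; simp [twist, hab, commutatorElement_def]
  · by_cases hb : t = b
    · subst hb; simp [twist, ha, commutatorElement_def, mul_assoc]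
    · simp [twist, ha, hb]

theorem blockPerm_mul_inv_conj_swap [DecidableEq J] (f : J → Perm Ω) {a b : J} (hab : a ≠ b)
    (hb : f b = 1) :
    blockPerm f * (prodCongr (swap a b) (Equiv.refl Ω) * blockPerm f *
      (prodCongr (swap a b) (Equiv.refl Ω))⁻¹)⁻¹ = blockPerm (twist a b (f a)) := by
  rw [prodCongr_conj_blockPerm, ← map_inv, ← map_mul]
  congr 1
  funext t
  by_cases ha : t = a
  · subst ha; simp [twist, hab, hb]
  · by_cases htb : t = b
    · subst htb; simp [twist, Ne.symm hab, hb]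
    · simp [twist, ha, htb, swap_apply_of_ne_of_ne ha htb]

end Blocks

section Perfect

variable {Ω : Type*}

theorem blockPerm_mulSingle_zero_mem_commutatorSet (c : Perm Ω) :
    blockPerm (Pi.mulSingle (0 : ℤ) c) ∈ commutatorSet (Perm (ℤ × Ω)) := by
  -- `P` applies `c` on every block `n ≥ 0`; its conjugate by the shift does so for `n ≥ 1`
  set P := blockPerm (fun n : ℤ => if 0 ≤ n then c else 1)
  set shift := prodCongr (Equiv.addRight (1 : ℤ)) (Equiv.refl Ω)
  refine mem_commutatorSet_iff.mpr ⟨shift, P⁻¹, ?_⟩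
  rw [commutatorElement_def, inv_inv, ← map_inv, prodCongr_conj_blockPerm, ← map_mul]
  congr 1
  funext n
  by_cases h0 : n = 0
  · simp [h0]
  · by_cases hn : 0 ≤ n
    · simp [h0, hn, show 1 ≤ n by omega]
    · simp [h0, hn, show ¬ 1 ≤ n by omega]

theorem commutator_perm_eq_top [Infinite Ω] : commutator (Perm Ω) = ⊤ := by
  have hZ : commutator (Perm (ℤ × Ω)) = ⊤ := by
    obtain ⟨g₁, g₂, h⟩ := IsMoiety.exists_forall_conj_mem_imp_eq_top (aleph0_le_mk _)
      (isMoiety_block (Ω := Ω) (zero_ne_one' ℤ))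
    refine h _ fun σ hσ => ?_
    obtain ⟨c, rfl⟩ := exists_blockPerm_mulSingle_eq hσ
    have hc : blockPerm (Pi.mulSingle 0 c) ∈ commutator (Perm (ℤ × Ω)) := by
      rw [commutator_eq_closure]
      exact Subgroup.subset_closure (blockPerm_mulSingle_zero_mem_commutatorSet c)
    have hnormal : (commutator (Perm (ℤ × Ω))).Normal := inferInstance
    exact ⟨hnormal.conj_mem _ hc g₁, hnormal.conj_mem _ hc g₂⟩
  obtain ⟨e⟩ := nonempty_equiv_prod_of_countable ℤ Ω
  have := Subgroup.map_commutator (⊤ : Subgroup (Perm (ℤ × Ω))) ⊤ e.symm.permCongrHom.toMonoidHom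
  rw [Subgroup.map_top_of_surjective _ e.symm.permCongrHom.surjective, ← commutator_def, hZ,
    Subgroup.map_top_of_surjective _ e.symm.permCongrHom.surjective] at this
  rw [commutator_def, ← this]

end Perfect

/-- A chain of proper subgroups that is merely monotone and covers `G` has a strictly increasing
subsequence, so this agrees with the definition by strictly increasing chains. -/
def HasUncountableCofinality (G : Type*) [Group G] : Prop :=
  ∀ H : ℕ → Subgroup G, Monotone H → (∀ g, ∃ n, g ∈ H n) → ∃ n, H n = ⊤

theorem HasUncountableCofinality.of_mulEquiv {G G' : Type*} [Group G] [Group G']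
    (h : HasUncountableCofinality G) (e : G ≃* G') : HasUncountableCofinality G' := by
  intro H hmono hcover
  obtain ⟨n, hn⟩ := h (fun n => (H n).comap e.toMonoidHom)
    (fun _ _ hab => Subgroup.comap_mono (hmono hab)) (fun g => hcover (e g))
  refine ⟨n, eq_top_iff.mpr fun g _ => ?_⟩
  simpa using (hn ▸ Subgroup.mem_top (e.symm g) : e.symm g ∈ (H n).comap e.toMonoidHom)

section Cofinality

variable {Ω : Type*}

theorem exists_forall_blockPerm_twist_mem {H : ℕ → Subgroup (Perm ((ℕ ⊕ ℕ) × Ω))}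
    (hmono : Monotone H) (hcover : ∀ g, ∃ n, g ∈ H n) :
    ∃ j K, ∀ c : Perm Ω, blockPerm (twist (Sum.inl j) (Sum.inr j) c) ∈ H K := by
  choose level hlevel using hcover
  set z : ℕ → Perm ((ℕ ⊕ ℕ) × Ω) :=
    fun j => prodCongr (swap (Sum.inl j) (Sum.inr j)) (Equiv.refl Ω)
  by_contra! hbad
  choose c hc using fun j => hbad j (max j (level (z j)))
  set D := blockPerm (Sum.elim c 1)
  set N := level D
  apply hc N
  have hD := blockPerm_mul_inv_conj_swap (Sum.elim c 1) (Sum.inl_ne_inr (a := N) (b := N)) rfl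
  rw [Sum.elim_inl] at hD
  rw [← hD]
  have hDN : D ∈ H (max N (level (z N))) := hmono (le_max_left _ _) (hlevel D)
  have hzN : z N ∈ H (max N (level (z N))) := hmono (le_max_right _ _) (hlevel _)
  exact mul_mem hDN (inv_mem (mul_mem (mul_mem hzN hDN) (inv_mem hzN)))

theorem hasUncountableCofinality_perm_sum_prod [Infinite Ω] :
    HasUncountableCofinality (Perm ((ℕ ⊕ ℕ) × Ω)) := by
  intro H hmono hcover
  obtain ⟨j, K, hK⟩ := exists_forall_blockPerm_twist_mem hmono hcover
  have hcomm : commutator (Perm Ω) ≤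
      (H K).comap (blockPerm.comp (MonoidHom.mulSingle _ (Sum.inr j))) := by
    rw [commutator_eq_closure, Subgroup.closure_le]
    rintro _ ⟨c, d, rfl⟩
    have := mul_mem (mul_mem (hK c⁻¹) (hK d⁻¹)) (inv_mem (hK (c⁻¹ * d⁻¹)))
    rwa [← map_mul, ← map_inv, ← map_mul, twist_mul_twist_mul_inv_twist Sum.inl_ne_inr, inv_inv,
      inv_inv] at this
  have hblock : permOn (block (Sum.inr j)) ≤ H K := fun σ hσ => by
    obtain ⟨w, rfl⟩ := exists_blockPerm_mulSingle_eq hσ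
    exact hcomm (by simp [commutator_perm_eq_top])
  obtain ⟨g₁, g₂, h⟩ := IsMoiety.exists_forall_conj_mem_imp_eq_top (aleph0_le_mk _)
    (isMoiety_block (Ω := Ω) (Sum.inr_ne_inl (a := j) (b := j)))
  obtain ⟨n₁, hn₁⟩ := hcover g₁
  obtain ⟨n₂, hn₂⟩ := hcover g₂
  set M := max K (max n₁ n₂)
  have hg₁ : g₁ ∈ H M := hmono ((le_max_left _ _).trans (le_max_right _ _)) hn₁
  have hg₂ : g₂ ∈ H M := hmono ((le_max_right _ _).trans (le_max_right _ _)) hn₂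
  refine ⟨M, h _ fun σ hσ => ?_⟩
  have hσM : σ ∈ H M := hmono (le_max_left _ _) (hblock hσ)
  exact ⟨mul_mem (mul_mem hg₁ hσM) (inv_mem hg₁), mul_mem (mul_mem hg₂ hσM) (inv_mem hg₂)⟩

theorem hasUncountableCofinality_perm [Infinite Ω] : HasUncountableCofinality (Perm Ω) := by
  obtain ⟨e⟩ := nonempty_equiv_prod_of_countable (ℕ ⊕ ℕ) Ω
  exact hasUncountableCofinality_perm_sum_prod.of_mulEquiv e.symm.permCongrHom

end Cofinality

/-- The symmetric group of an infinite set has uncountable cofinality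
(Macpherson–Neumann): it is not the union of a countable strictly increasing chain of
proper subgroups. -/
theorem uncountableCofinality_sym (Ω : Type*) [Infinite Ω]
    (H : ℕ → Subgroup (Equiv.Perm Ω))
    (hchain : ∀ n, H n < H (n + 1))
    (hproper : ∀ n, H n ≠ ⊤)
    (hunion : ∀ g : Equiv.Perm Ω, ∃ n, g ∈ H n) : False := by
  obtain ⟨n, hn⟩ :=
    hasUncountableCofinality_perm H (monotone_nat_of_le_succ fun n => (hchain n).le) hunion
  exact hproper n hn
end

section
/- In the symmetric group Sym(ℕ), equipped with the topology of pointwise convergence, there exists an element whose conjugacy class is comeagre (i.e. contains a countable intersection of dense open subsets). -/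
/-!
A permutation of `ℕ` is determined up to conjugacy by how many cycles of each length `n`
it has (`n = 0` standing for infinite cycles): decompose `ℕ` into orbits and identify each
orbit of length `n` with `ZMod n` carrying `· + 1`. The permutations with only finite
cycles and infinitely many cycles of every finite length therefore form a single
conjugacy class, which contains an explicit model. This class is the intersection of the
countably many sets "`x` lies on a finite cycle" and "some `x > M` lies on a cycle of
length `n`". Each of these is open, because the length of a finite cycle through `x` is
read off finitely many values, and dense, because any finite partial injection extends to
a permutation of finite order, or to one with an additional `n`-cycle beyond `M`.
-/

/-- The topology of pointwise convergence on `Sym(ℕ)`: the subspace topology inherited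
from the product topology on `ℕ → ℕ`, where `ℕ` is discrete. -/
def permPointwiseTopology : TopologicalSpace (Equiv.Perm ℕ) :=
  TopologicalSpace.induced (fun g : Equiv.Perm ℕ => (g : ℕ → ℕ))
    (@Pi.topologicalSpace ℕ (fun _ => ℕ) (fun _ => ⊥))

open Function MulAction Subgroup Set Filter Topology

namespace Function

variable {α β : Type*} {f g : α → α} {x : α}

theorem iterate_eq_iterate_of_forall_lt {n : ℕ} (h : ∀ j < n, f (g^[j] x) = g (g^[j] x)) :
    f^[n] x = g^[n] x := by
  induction n with
  | zero => rfl
  | succ n ih =>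
    rw [iterate_succ_apply', iterate_succ_apply', ih fun j hj => h j (by omega),
      h n n.lt_succ_self]

theorem minimalPeriod_eq_of_forall_lt (hx : x ∈ periodicPts g)
    (h : ∀ j < minimalPeriod g x, f (g^[j] x) = g (g^[j] x)) :
    minimalPeriod f x = minimalPeriod g x := by
  have hiter : ∀ j ≤ minimalPeriod g x, f^[j] x = g^[j] x := fun j hj =>
    iterate_eq_iterate_of_forall_lt fun i hi => h i (by omega)
  have hpos := minimalPeriod_pos_of_mem_periodicPts hx
  have hf : IsPeriodicPt f (minimalPeriod g x) x :=
    (hiter _ le_rfl).trans (isPeriodicPt_minimalPeriod g x)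
  have hle := hf.minimalPeriod_le hpos
  have hg : IsPeriodicPt g (minimalPeriod f x) x :=
    (hiter _ hle).symm.trans (isPeriodicPt_minimalPeriod f x)
  exact hle.antisymm (hg.minimalPeriod_le (hf.minimalPeriod_pos hpos))

theorem minimalPeriod_apply_of_semiconj {e : α → β} {g : β → β} (he : Injective e)
    (h : Semiconj e f g) (x : α) : minimalPeriod g (e x) = minimalPeriod f x :=
  minimalPeriod_eq_minimalPeriod_iff.2 fun n => by
    simp only [IsPeriodicPt, IsFixedPt, ← (h.iterate_right n) x, he.eq_iff]

end Function

theorem ZMod.minimalPeriod_add_one (n : ℕ) (z : ZMod n) : minimalPeriod (· + 1) z = n := by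
  rw [← Nat.dvd_right_iff_eq]
  intro m
  rw [← isPeriodicPt_iff_minimalPeriod_dvd, IsPeriodicPt, IsFixedPt, add_right_iterate,
    add_eq_left, nsmul_one, ZMod.natCast_eq_zero_iff]

namespace Equiv.Perm

variable {α β : Type*}

theorem isConj_permCongr_permCongr (e φ : α ≃ β) (σ : Perm α) :
    IsConj (e.permCongr σ) (φ.permCongr σ) :=
  isConj_iff.2 ⟨e.symm.trans φ, by ext; simp⟩

/-- `ZMod 0 = ℤ`, so infinite cycles are covered as well. -/
noncomputable def cycleDecomposition (σ : Perm α) :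
    α ≃ Σ q : orbitRel.Quotient (zpowers σ) α, ZMod (minimalPeriod σ q.out) :=
  (selfEquivSigmaOrbits (zpowers σ) α).trans
    (Equiv.sigmaCongrRight fun q => orbitZPowersEquiv σ q.out)

theorem cycleDecomposition_symm_apply_intCast (σ : Perm α)
    (q : orbitRel.Quotient (zpowers σ) α) (k : ℤ) :
    (cycleDecomposition σ).symm ⟨q, k⟩ = (σ ^ k) q.out := by
  simp only [cycleDecomposition, Equiv.symm_trans_apply, Equiv.sigmaCongrRight_symm,
    Equiv.sigmaCongrRight_apply]
  rw [orbitZPowersEquiv_symm_apply']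
  rfl

theorem permCongr_cycleDecomposition (σ : Perm α) :
    (cycleDecomposition σ).permCongr σ = sigmaCongrRight fun _ => Equiv.addRight 1 := by
  ext ⟨q, k⟩ : 1
  rw [permCongr_apply, ← Equiv.eq_symm_apply]
  obtain ⟨k, rfl⟩ := ZMod.intCast_surjective k
  simp only [sigmaCongrRight_apply, coe_addRight]
  rw [← Int.cast_one, ← Int.cast_add, cycleDecomposition_symm_apply_intCast,
    cycleDecomposition_symm_apply_intCast, ← mul_apply, ← zpow_one_add, add_comm]

abbrev CyclesOfLength (σ : Perm α) (n : ℕ) :=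
  {q : orbitRel.Quotient (zpowers σ) α // minimalPeriod σ q.out = n}

theorem exists_permCongr_eq_of_equiv_cyclesOfLength {σ : Perm α} {τ : Perm β}
    (e : ∀ n, σ.CyclesOfLength n ≃ τ.CyclesOfLength n) : ∃ φ : α ≃ β, φ.permCongr σ = τ := by
  let ε := ofFiberEquiv e
  have hε : ∀ q, minimalPeriod τ (ε q).out = minimalPeriod σ q.out := ofFiberEquiv_map e
  let ψ : (Σ q : orbitRel.Quotient (zpowers σ) α, ZMod (minimalPeriod σ q.out)) ≃
      Σ q : orbitRel.Quotient (zpowers τ) β, ZMod (minimalPeriod τ q.out) :=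
    Equiv.sigmaCongr ε fun q => (ZMod.ringEquivCongr (hε q).symm).toEquiv
  have hψ : ψ.permCongr (sigmaCongrRight fun _ => Equiv.addRight 1) =
      sigmaCongrRight fun _ => Equiv.addRight 1 := by
    ext1 x
    obtain ⟨⟨q, k⟩, rfl⟩ := ψ.surjective x
    rw [permCongr_apply, symm_apply_apply]
    simp [ψ, Equiv.sigmaCongr]
  refine ⟨(cycleDecomposition σ).trans (ψ.trans (cycleDecomposition τ).symm), ?_⟩
  change (cycleDecomposition τ).symm.permCongr
    (ψ.permCongr ((cycleDecomposition σ).permCongr σ)) = τ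
  rw [permCongr_cycleDecomposition, hψ, ← permCongr_cycleDecomposition τ, ← permCongr_symm,
    symm_apply_apply]

theorem minimalPeriod_eq_of_mem_orbit {σ : Perm α} {x y : α} (h : y ∈ orbit (zpowers σ) x) :
    minimalPeriod σ y = minimalPeriod σ x := by
  obtain ⟨⟨_, k, rfl⟩, rfl⟩ := h
  exact minimalPeriod_apply_of_semiconj (σ ^ k).injective
    (fun z => DFunLike.congr_fun (Commute.zpow_self σ k).eq z) x

theorem finite_orbit_zpowers {σ : Perm α} {x : α} (hx : x ∈ periodicPts σ) :
    (orbit (zpowers σ) x).Finite := by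
  have : NeZero (minimalPeriod σ x) := ⟨(minimalPeriod_pos_of_mem_periodicPts hx).ne'⟩
  exact Set.finite_coe_iff.1 (Finite.of_equiv _ (orbitZPowersEquiv σ x).symm)

theorem infinite_cyclesOfLength {σ : Perm α} {n : ℕ} (hn : 0 < n)
    (h : {x | minimalPeriod σ x = n}.Infinite) : Infinite (σ.CyclesOfLength n) := by
  rw [← not_finite_iff_infinite]
  intro hfin
  refine h (Set.Finite.subset (Set.finite_iUnion fun q : σ.CyclesOfLength n =>
    finite_orbit_zpowers (minimalPeriod_pos_iff_mem_periodicPts.1 (q.2 ▸ hn))) ?_)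
  intro x hx
  have hout : (Quotient.mk'' x : orbitRel.Quotient (zpowers σ) α).out ∈ orbit (zpowers σ) x :=
    orbitRel_apply.1 (Quotient.mk_out' x)
  exact Set.mem_iUnion.2
    ⟨⟨Quotient.mk'' x, (minimalPeriod_eq_of_mem_orbit hout).trans hx⟩, mem_orbit_symm.1 hout⟩

structure HasGenericCycleType (σ : Perm α) : Prop where
  mem_periodicPts : ∀ x, x ∈ periodicPts σ
  infinite_setOf_minimalPeriod_eq : ∀ n, 0 < n → {x | minimalPeriod σ x = n}.Infinite

theorem HasGenericCycleType.isEmpty_cyclesOfLength_zero {σ : Perm α}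
    (hσ : HasGenericCycleType σ) : IsEmpty (σ.CyclesOfLength 0) :=
  ⟨fun q => (minimalPeriod_pos_of_mem_periodicPts (hσ.mem_periodicPts _)).ne' q.2⟩

theorem HasGenericCycleType.exists_permCongr_eq [Countable α] [Countable β] {σ : Perm α}
    {τ : Perm β} (hσ : HasGenericCycleType σ) (hτ : HasGenericCycleType τ) :
    ∃ φ : α ≃ β, φ.permCongr σ = τ := by
  refine exists_permCongr_eq_of_equiv_cyclesOfLength fun n => Classical.choice ?_
  rcases n.eq_zero_or_pos with rfl | hn
  · have := hσ.isEmpty_cyclesOfLength_zero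
    have := hτ.isEmpty_cyclesOfLength_zero
    exact ⟨equivOfIsEmpty _ _⟩
  · have := infinite_cyclesOfLength hn (hσ.infinite_setOf_minimalPeriod_eq n hn)
    have := infinite_cyclesOfLength hn (hτ.infinite_setOf_minimalPeriod_eq n hn)
    exact nonempty_equiv_of_countable

def genericModel : Perm (Σ n : ℕ, ℕ × ZMod (n + 1)) :=
  sigmaCongrRight fun _ => prodCongr (Equiv.refl ℕ) (Equiv.addRight 1)

theorem minimalPeriod_genericModel (n i : ℕ) (z : ZMod (n + 1)) :
    minimalPeriod genericModel ⟨n, i, z⟩ = n + 1 :=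
  (minimalPeriod_apply_of_semiconj (f := (· + 1))
    (e := fun z : ZMod (n + 1) => (⟨n, i, z⟩ : Σ n : ℕ, ℕ × ZMod (n + 1)))
    (sigma_mk_injective.comp (Prod.mk_right_injective i)) (fun _ => rfl) z).trans
    (ZMod.minimalPeriod_add_one (n + 1) z)

theorem hasGenericCycleType_genericModel : HasGenericCycleType genericModel where
  mem_periodicPts := fun ⟨n, i, z⟩ =>
    minimalPeriod_pos_iff_mem_periodicPts.1 ((minimalPeriod_genericModel n i z).symm ▸ n.succ_pos)
  infinite_setOf_minimalPeriod_eq n hn := by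
    obtain ⟨n, rfl⟩ := Nat.exists_eq_add_one_of_ne_zero hn.ne'
    exact Set.infinite_of_injective_forall_mem
      (f := fun i : ℕ => (⟨n, i, 0⟩ : Σ n : ℕ, ℕ × ZMod (n + 1)))
      (fun i j h => by simpa using h) fun i => minimalPeriod_genericModel n i 0

theorem mem_periodicPts_of_isOfFinOrder {σ : Perm α} (hσ : IsOfFinOrder σ) (x : α) :
    x ∈ periodicPts σ := by
  obtain ⟨m, hm, hσm⟩ := isOfFinOrder_iff_pow_eq_one.1 hσ
  exact ⟨m, hm, by rw [IsPeriodicPt, IsFixedPt, ← coe_pow, hσm, coe_one, id]⟩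

theorem exists_isOfFinOrder_eqOn (h₀ : Perm α) {I : Set α} (hI : I.Finite) :
    ∃ h : Perm α, IsOfFinOrder h ∧ EqOn h h₀ I := by
  classical
  have : Finite I := hI.to_subtype
  have : Finite ↥(I ∪ h₀ '' I) := (hI.union (hI.image h₀)).to_subtype
  obtain ⟨π, hπ⟩ := exists_extending_pair (α := I) (β := ↥(I ∪ h₀ '' I))
    (fun a => ⟨a, Or.inl a.2⟩) (fun a => ⟨h₀ a, Or.inr (mem_image_of_mem h₀ a.2)⟩)
    (fun _ _ hab => Subtype.ext (congrArg Subtype.val hab :))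
    (fun _ _ hab => Subtype.ext (h₀.injective (congrArg Subtype.val hab :)))
  refine ⟨ofSubtype π, ofSubtype.isOfFinOrder (isOfFinOrder_of_finite π), fun a ha => ?_⟩
  rw [ofSubtype_apply_of_mem π (Or.inl ha)]
  exact congrArg Subtype.val (hπ ⟨a, ha⟩)

theorem exists_eqOn_minimalPeriod_eq (h₀ : Perm ℕ) {I : Set ℕ} (hI : I.Finite) {n : ℕ}
    (hn : 0 < n) (M : ℕ) : ∃ h : Perm ℕ, EqOn h h₀ I ∧ ∃ x, M < x ∧ minimalPeriod h x = n := by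
  have : NeZero n := ⟨hn.ne'⟩
  have : Finite I := hI.to_subtype
  obtain ⟨b, hb⟩ := (hI.union (hI.image h₀)).bddAbove
  set base := max b M + 1
  let emb : ZMod n → ℕ := fun z => base + z.val
  have hemb : Injective emb := fun z w h => ZMod.val_injective n (Nat.add_left_cancel h)
  have hne : ∀ a ∈ I ∪ h₀ '' I, ∀ z, a ≠ emb z := fun a ha z => by
    have := hb ha; simp only [emb]; omega
  -- extend `h₀` on `I` by `· + 1` on a copy of `ZMod n` lying above `I`, `h₀ '' I` and `M`
  obtain ⟨h, hh⟩ := exists_extending_pair (Sum.elim ((↑) : I → ℕ) emb)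
    (Sum.elim (h₀ ∘ (↑) : I → ℕ) (emb ∘ (· + 1)))
    (Subtype.val_injective.sumElim hemb fun a z => hne a (Or.inl a.2) z)
    ((h₀.injective.comp Subtype.val_injective).sumElim (hemb.comp (add_left_injective 1))
      fun a z => hne _ (Or.inr (mem_image_of_mem h₀ a.2)) _)
  refine ⟨h, fun a ha => hh (Sum.inl ⟨a, ha⟩), base, by omega, ?_⟩
  have hsemi : Semiconj emb (· + 1) h := fun z => (hh (Sum.inr z)).symm
  simpa [emb] using
    (minimalPeriod_apply_of_semiconj hemb hsemi 0).trans (ZMod.minimalPeriod_add_one n 0)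

section Topology

attribute [local instance] permPointwiseTopology

theorem hasBasis_nhds (h₀ : Perm ℕ) :
    (𝓝 h₀).HasBasis Set.Finite fun I => {h : Perm ℕ | EqOn h h₀ I} := by
  change (@nhds _ (TopologicalSpace.induced _ Pi.topologicalSpace) h₀).HasBasis _ _
  rw [nhds_induced, nhds_pi, nhds_discrete]
  exact (hasBasis_pi_pure _).comap _

theorem eventually_minimalPeriod_eq {h₀ : Perm ℕ} {x : ℕ} (hx : x ∈ periodicPts h₀) :
    ∀ᶠ h : Perm ℕ in 𝓝 h₀, minimalPeriod h x = minimalPeriod h₀ x :=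
  (hasBasis_nhds h₀).mem_iff.2 ⟨(fun j => h₀^[j] x) '' Iio (minimalPeriod h₀ x),
    (finite_Iio _).image _,
    fun _ hh => minimalPeriod_eq_of_forall_lt hx fun _ hj => hh (mem_image_of_mem _ hj)⟩

theorem isOpen_setOf_mem_periodicPts (x : ℕ) : IsOpen {h : Perm ℕ | x ∈ periodicPts h} :=
  isOpen_iff_mem_nhds.2 fun _ hx => by
    filter_upwards [eventually_minimalPeriod_eq hx] with h hh
    exact minimalPeriod_pos_iff_mem_periodicPts.1 (hh ▸ minimalPeriod_pos_of_mem_periodicPts hx)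

theorem isOpen_setOf_exists_minimalPeriod_eq (M : ℕ) {n : ℕ} (hn : 0 < n) :
    IsOpen {h : Perm ℕ | ∃ x, M < x ∧ minimalPeriod h x = n} :=
  isOpen_iff_mem_nhds.2 fun _ ⟨x, hxM, hx⟩ => by
    filter_upwards [eventually_minimalPeriod_eq (minimalPeriod_pos_iff_mem_periodicPts.1
      (hx ▸ hn))] with h hh
    exact ⟨x, hxM, hh.trans hx⟩

theorem dense_of_exists_eqOn {S : Set (Perm ℕ)}
    (hS : ∀ (h₀ : Perm ℕ) (I : Set ℕ), I.Finite → ∃ h ∈ S, EqOn h h₀ I) : Dense S :=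
  fun h₀ => (mem_closure_iff_nhds_basis (hasBasis_nhds h₀)).2 fun I hI => hS h₀ I hI

theorem eventually_residual_hasGenericCycleType :
    ∀ᶠ h in residual (Perm ℕ), HasGenericCycleType h := by
  have hper (x : ℕ) : ∀ᶠ h : Perm ℕ in residual _, x ∈ periodicPts h :=
    residual_of_dense_open (isOpen_setOf_mem_periodicPts x) <| dense_of_exists_eqOn
      fun h₀ _ hI => let ⟨h, hh, hI⟩ := exists_isOfFinOrder_eqOn h₀ hI
        ⟨h, mem_periodicPts_of_isOfFinOrder hh x, hI⟩
  have hcyc (n : ℕ) (hn : 0 < n) (M : ℕ) :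
      ∀ᶠ h : Perm ℕ in residual _, ∃ x, M < x ∧ minimalPeriod h x = n :=
    residual_of_dense_open (isOpen_setOf_exists_minimalPeriod_eq M hn) <| dense_of_exists_eqOn
      fun h₀ _ hI => let ⟨h, hI, hh⟩ := exists_eqOn_minimalPeriod_eq h₀ hI hn M
        ⟨h, hh, hI⟩
  filter_upwards [eventually_countable_forall.2 hper, eventually_countable_forall.2 fun n =>
    eventually_imp_distrib_left.2 fun hn => eventually_countable_forall.2 (hcyc n hn)]
    with h hper hcyc
  exact ⟨hper, fun n hn => infinite_of_forall_exists_gt fun M =>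
    (hcyc n hn M).imp fun _ hx => ⟨hx.2, hx.1⟩⟩

end Topology

end Equiv.Perm

/-- There is a generic permutation of `ℕ`: an element of `Sym(ℕ)` whose conjugacy class
is comeagre in the topology of pointwise convergence. -/
theorem exists_generic_permutation :
    ∃ g : Equiv.Perm ℕ,
      {h : Equiv.Perm ℕ | IsConj g h} ∈ @residual (Equiv.Perm ℕ) permPointwiseTopology := by
  obtain ⟨e⟩ : Nonempty ((Σ n : ℕ, ℕ × ZMod (n + 1)) ≃ ℕ) := nonempty_equiv_of_countable
  refine ⟨e.permCongr Equiv.Perm.genericModel, ?_⟩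
  filter_upwards [Equiv.Perm.eventually_residual_hasGenericCycleType] with h hh
  obtain ⟨φ, rfl⟩ := Equiv.Perm.hasGenericCycleType_genericModel.exists_permCongr_eq hh
  exact Equiv.Perm.isConj_permCongr_permCongr e φ _
end
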